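/- Under the hypotheses of the eigenvalue identity λ = -Δ(ln φ) + div(s) - |∇(ln φ) - s|² + K - F on a closed orientable surface S of genus 0, if μ := min_S F > 0 and Area(S) > 4π/μ, then λ < 0. -/

import Mathlib

/-!
Integrating the identity over `S`, the Laplacian and divergence terms vanish, the square term is
nonpositive, Gauss–Bonnet contributes `4π` and `F ≥ μ` contributes at most `-μ · Area(S)`, so
`λ · Area(S) ≤ 4π - μ · Area(S) < 0`.
-/

open MeasureTheory

section EigenvalueIdentity

variable {S : Type*} [MeasurableSpace S] (area : Measure S)
  {lapLnφ divs normSq K F : S → ℝ} {lam μ : ℝ}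

theorem mul_measureReal_univ_eq_of_eigenvalue_identity
    (hlap : Integrable lapLnφ area) (hdiv : Integrable divs area)
    (hn : Integrable normSq area) (hK : Integrable K area) (hF : Integrable F area)
    (hlap0 : ∫ x, lapLnφ x ∂area = 0) (hdiv0 : ∫ x, divs x ∂area = 0)
    (hid : ∀ x, lam = -lapLnφ x + divs x - normSq x + K x - F x) :
    lam * area.real Set.univ =
      -∫ x, normSq x ∂area + ∫ x, K x ∂area - ∫ x, F x ∂area := by
  calc lam * area.real Set.univ
      = ∫ x, (-lapLnφ x + divs x - normSq x + K x - F x) ∂area := by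
        rw [← integral_congr_ae (Filter.Eventually.of_forall hid), integral_const, smul_eq_mul,
          mul_comm]
    _ = -∫ x, normSq x ∂area + ∫ x, K x ∂area - ∫ x, F x ∂area := by
        have h₁ : Integrable (fun x => -lapLnφ x + divs x) area := hlap.neg.add hdiv
        have h₂ : Integrable (fun x => -lapLnφ x + divs x - normSq x) area := h₁.sub hn
        have h₃ : Integrable (fun x => -lapLnφ x + divs x - normSq x + K x) area := h₂.add hK
        rw [integral_sub h₃ hF, integral_add h₂ hK, integral_sub h₁ hn,
          integral_add (f := fun x => -lapLnφ x) hlap.neg hdiv, integral_neg, hlap0, hdiv0]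
        ring

theorem mul_measureReal_univ_le_of_eigenvalue_identity [IsFiniteMeasure area]
    (hlap : Integrable lapLnφ area) (hdiv : Integrable divs area)
    (hn : Integrable normSq area) (hK : Integrable K area) (hF : Integrable F area)
    (hlap0 : ∫ x, lapLnφ x ∂area = 0) (hdiv0 : ∫ x, divs x ∂area = 0)
    (hid : ∀ x, lam = -lapLnφ x + divs x - normSq x + K x - F x)
    (hnormSq : ∀ x, 0 ≤ normSq x) (hmin : ∀ x, μ ≤ F x) :
    lam * area.real Set.univ ≤ ∫ x, K x ∂area - μ * area.real Set.univ := by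
  have hnormSq_int : 0 ≤ ∫ x, normSq x ∂area := integral_nonneg hnormSq
  have hF_int : μ * area.real Set.univ ≤ ∫ x, F x ∂area := by
    simpa only [integral_const, smul_eq_mul, mul_comm] using
      integral_mono (integrable_const μ) hF hmin
  rw [mul_measureReal_univ_eq_of_eigenvalue_identity area hlap hdiv hn hK hF hlap0 hdiv0 hid]
  linarith

end EigenvalueIdentity

theorem Continuous.integrable_of_compactSpace {S : Type*} [TopologicalSpace S] [CompactSpace S]
    [MeasurableSpace S] [OpensMeasurableSpace S] {area : Measure S} [IsFiniteMeasure area]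
    {f : S → ℝ} (hf : Continuous f) : Integrable f area :=
  hf.integrable_of_hasCompactSupport (HasCompactSupport.of_compactSpace f)

theorem stmt_2_general {S : Type*} [TopologicalSpace S] [CompactSpace S]
    [MeasurableSpace S] [BorelSpace S]
    (area : Measure S) [IsFiniteMeasure area]
    (lapLnφ divs normSq K F : S → ℝ) (lam μ : ℝ)
    (hlapc : Continuous lapLnφ) (hdivc : Continuous divs) (hnc : Continuous normSq)
    (hKc : Continuous K) (hFc : Continuous F)
    (hnormSq : ∀ x, 0 ≤ normSq x)
    (hlap0 : ∫ x, lapLnφ x ∂area = 0)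
    (hdiv0 : ∫ x, divs x ∂area = 0)
    (hGB : ∫ x, K x ∂area = 4 * Real.pi)  -- Gauss–Bonnet for genus 0
    (hid : ∀ x, lam = -lapLnφ x + divs x - normSq x + K x - F x)
    (hmin : ∀ x, μ ≤ F x)
    (hμpos : 0 < μ)
    (hA : 4 * Real.pi / μ < (area Set.univ).toReal) :
    lam < 0 := by
  have hbound := mul_measureReal_univ_le_of_eigenvalue_identity area
    hlapc.integrable_of_compactSpace hdivc.integrable_of_compactSpace
    hnc.integrable_of_compactSpace hKc.integrable_of_compactSpace hFc.integrable_of_compactSpace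
    hlap0 hdiv0 hid hnormSq hmin
  have harea : 4 * Real.pi < μ * area.real Set.univ := (div_lt_iff₀' hμpos).mp hA
  have harea_pos : 0 < area.real Set.univ := lt_trans (by positivity) hA
  exact neg_of_mul_neg_left (by linarith) harea_pos.le

/-- under the eigenvalue identity on a closed orientable surface of genus 0,
if `μ := min_S F > 0` and `Area(S) > 4π/μ` then `λ < 0`. -/
theorem stmt_2 {S : Type*} [TopologicalSpace S] [CompactSpace S] [Nonempty S]
    [MeasurableSpace S] [BorelSpace S]
    (area : Measure S) [IsFiniteMeasure area]
    (lapLnφ divs normSq K F : S → ℝ) (lam μ : ℝ)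
    (hlapc : Continuous lapLnφ) (hdivc : Continuous divs) (hnc : Continuous normSq)
    (hKc : Continuous K) (hFc : Continuous F)
    (hnormSq : ∀ x, 0 ≤ normSq x)
    (hlap0 : ∫ x, lapLnφ x ∂area = 0)
    (hdiv0 : ∫ x, divs x ∂area = 0)
    (hGB : ∫ x, K x ∂area = 4 * Real.pi)  -- Gauss–Bonnet for genus 0
    (hid : ∀ x, lam = -lapLnφ x + divs x - normSq x + K x - F x)
    (hmin : ∀ x, μ ≤ F x) (hex : ∃ x, F x = μ)
    (hμpos : 0 < μ)
    (hA : 4 * Real.pi / μ < (area Set.univ).toReal) :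
    lam < 0 :=
  stmt_2_general area lapLnφ divs normSq K F lam μ hlapc hdivc hnc hKc hFc hnormSq hlap0 hdiv0 hGB
    hid hmin hμpos hA
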